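/- Let q be a prime power and let F be a finite field with q² elements, with field involution σ : x ↦ x^q, and let h(v) = v₁·σ(v₁) + v₂·σ(v₂) be the standard hermitian norm on F². Then the number of vectors v ∈ F² with h(v) = 1 equals q³ − q, and the number of nonzero vectors v ∈ F² with h(v) = 0 (nonzero isotropic vectors) equals (q+1)(q²−1). -/

import Mathlib

open Finset Polynomial

/-!
Write `N x = x ^ (q + 1) = x * σ x`. Since `x ^ (q ^ 2) = x`, `N` maps `Fˣ` into the nonzero
`σ`-fixed elements, i.e. the roots of `c ^ (q - 1) = 1`, of which there are at most `q - 1`;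
each fibre of `N` has at most `q + 1` elements, and `|Fˣ| = (q + 1) (q - 1)`, so every fibre over
a nonzero `σ`-fixed `c` has exactly `q + 1` elements. Counting `v = (a, b)` by `a`: `h v = 1`
reads `N b = 1 - N a`, with one solution `b` for the `q + 1` values of `a` with `N a = 1` and
`q + 1` solutions otherwise; a nonzero isotropic `v` has `a ≠ 0` and `N b = -N a`.
-/

theorem card_filter_pow_eq_le {R : Type*} [CommRing R] [IsDomain R] [Fintype R] [DecidableEq R]
    {n : ℕ} (hn : 0 < n) (c : R) : #{x | x ^ n = c} ≤ n :=
  calc #{x | x ^ n = c} ≤ (nthRoots n c).toFinset.card :=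
        card_le_card fun x hx => by simpa [mem_nthRoots hn] using hx
    _ ≤ n := (Multiset.toFinset_card_le _).trans (card_nthRoots n c)

theorem Nat.card_subtype_fin_two_eq_sum {α : Type*} [Fintype α] (P : α → α → Prop)
    [DecidableRel P] : Nat.card {v : Fin 2 → α // P (v 0) (v 1)} = ∑ a, #{b | P a b} := by
  rw [Nat.card_congr ((finTwoArrowEquiv α).subtypeEquiv (p := fun v => P (v 0) (v 1))
    (q := fun p => P p.1 p.2) fun _ => Iff.rfl), Nat.card_eq_fintype_card, Fintype.card_subtype,
    card_filter, Fintype.sum_prod_type]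
  simp only [card_filter]

namespace FiniteField

variable {F : Type*} [Field F] [Fintype F]

theorem card_filter_pow_eq [DecidableEq F] {n m : ℕ} (hnm : n * m = Fintype.card F - 1) {c : F}
    (hc : c ^ m = 1) : #{x | x ^ n = c} = n := by
  have hcard : 1 < Fintype.card F := Fintype.one_lt_card
  have hn : 0 < n := Nat.pos_of_ne_zero (by rintro rfl; omega)
  have hm : 0 < m := Nat.pos_of_ne_zero (by rintro rfl; omega)
  set C : Finset F := {c | c ^ m = 1}
  have hpow_mem : Set.MapsTo (· ^ n) ((univ : Finset F).erase 0 : Set F) (C : Set F) := by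
    intro x hx
    have hx0 : x ≠ 0 := by simpa using hx
    simpa [C, ← pow_mul, hnm] using pow_card_sub_one_eq_one x hx0
  have hfiber : ∀ c ∈ C, #{x ∈ univ.erase 0 | x ^ n = c} = #{x | x ^ n = c} := by
    intro c hc
    congr 1
    ext x
    simp only [mem_filter, mem_erase, mem_univ, and_true, true_and, and_iff_right_iff_imp]
    rintro rfl rfl
    simp [C, zero_pow hn.ne', zero_pow hm.ne'] at hc
  have hsum : ∑ c ∈ C, #{x | x ^ n = c} = n * m := by
    rw [← sum_congr rfl hfiber, ← card_eq_sum_card_fiberwise hpow_mem,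
      card_erase_of_mem (mem_univ _), card_univ, hnm]
  have hle : ∀ c ∈ C, #{x | x ^ n = c} ≤ n := fun c _ => card_filter_pow_eq_le hn c
  have hsum_eq : ∑ c ∈ C, #{x | x ^ n = c} = ∑ _c ∈ C, n := by
    refine le_antisymm (sum_le_sum hle) ?_
    rw [sum_const, smul_eq_mul, hsum, mul_comm]
    exact Nat.mul_le_mul_left n (card_filter_pow_eq_le hm 1)
  exact (sum_eq_sum_iff_of_le hle).1 hsum_eq c (by simpa [C] using hc)

variable {q : ℕ}

theorem exists_ringHom_eq_pow_of_card_eq_sq (hF : Fintype.card F = q ^ 2) :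
    ∃ σ : F →+* F, ∀ x, σ x = x ^ q := by
  obtain ⟨n, hp, hcard⟩ := card F (ringChar F)
  have : Fact (ringChar F).Prime := ⟨hp⟩
  -- `q ∣ q ^ 2 = pⁿ`, so `q` is a power of the characteristic `p`
  obtain ⟨k, -, rfl⟩ := (Nat.dvd_prime_pow hp).1 (hcard ▸ hF ▸ Dvd.intro_left _ (sq q).symm)
  exact ⟨iterateFrobenius F (ringChar F) k, iterateFrobenius_def _ _⟩

theorem two_le_of_card_eq_sq (hF : Fintype.card F = q ^ 2) : 2 ≤ q := by
  have : 1 < q ^ 2 := hF ▸ Fintype.one_lt_card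
  nlinarith

theorem pow_succ_pow_eq_of_card_eq_sq (hF : Fintype.card F = q ^ 2) (x : F) :
    (x ^ (q + 1)) ^ q = x ^ (q + 1) := by
  rw [pow_succ, mul_pow, ← pow_mul, ← sq, ← hF, pow_card, mul_comm]

theorem card_filter_pow_succ_eq_of_card_eq_sq [DecidableEq F] (hF : Fintype.card F = q ^ 2)
    {c : F} (hc0 : c ≠ 0) (hc : c ^ q = c) : #{x | x ^ (q + 1) = c} = q + 1 := by
  have hq : 1 ≤ q := (two_le_of_card_eq_sq hF).trans' (by norm_num)
  refine card_filter_pow_eq (m := q - 1) (by rw [hF, ← one_pow 2, Nat.sq_sub_sq, one_pow]) ?_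
  exact mul_right_cancel₀ hc0 (by rw [← pow_succ, Nat.sub_add_cancel hq, hc, one_mul])

theorem card_mul_pow_add_mul_pow_eq_one (hF : Fintype.card F = q ^ 2) :
    Nat.card {v : Fin 2 → F // v 0 * v 0 ^ q + v 1 * v 1 ^ q = 1} = q ^ 3 - q := by
  classical
  obtain ⟨σ, hσ⟩ := exists_ringHom_eq_pow_of_card_eq_sq hF
  have hq := two_le_of_card_eq_sq hF
  have hfiber (a : F) :
      #{b | a * a ^ q + b * b ^ q = 1} = if a ^ (q + 1) = 1 then 1 else q + 1 := by
    simp_rw [← pow_succ', ← eq_sub_iff_add_eq']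
    split_ifs with ha
    · exact card_eq_one.2 ⟨0, by ext; simp [ha]⟩
    · refine card_filter_pow_succ_eq_of_card_eq_sq hF (sub_ne_zero.2 (Ne.symm ha)) ?_
      rw [← hσ, map_sub, map_one, hσ, pow_succ_pow_eq_of_card_eq_sq hF]
  have hunit : #{a : F | a ^ (q + 1) = 1} = q + 1 :=
    card_filter_pow_succ_eq_of_card_eq_sq hF one_ne_zero (one_pow q)
  have hnonunit : #{a : F | ¬a ^ (q + 1) = 1} = q ^ 2 - (q + 1) := by
    have := card_filter_add_card_filter_not (s := univ) fun a : F => a ^ (q + 1) = 1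
    rw [card_univ, hF, hunit] at this
    omega
  rw [Nat.card_subtype_fin_two_eq_sum (fun a b => a * a ^ q + b * b ^ q = 1),
    sum_congr rfl fun a _ => hfiber a, sum_ite, sum_const, sum_const, hunit, hnonunit,
    smul_eq_mul, smul_eq_mul]
  zify [show q + 1 ≤ q ^ 2 by nlinarith, show q ≤ q ^ 3 by nlinarith]
  ring

theorem card_ne_zero_and_mul_pow_add_mul_pow_eq_zero (hF : Fintype.card F = q ^ 2) :
    Nat.card {v : Fin 2 → F // v ≠ 0 ∧ v 0 * v 0 ^ q + v 1 * v 1 ^ q = 0} =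
      (q + 1) * (q ^ 2 - 1) := by
  classical
  obtain ⟨σ, hσ⟩ := exists_ringHom_eq_pow_of_card_eq_sq hF
  have hq : q + 1 ≠ 0 := by omega
  have hiff (v : Fin 2 → F) : (v ≠ 0 ∧ v 0 * v 0 ^ q + v 1 * v 1 ^ q = 0) ↔
      (v 0 ≠ 0 ∧ v 0 * v 0 ^ q + v 1 * v 1 ^ q = 0) := by
    refine and_congr_left fun h => ⟨fun hv h0 => hv ?_, fun h0 hv => h0 (congrFun hv 0)⟩
    simp only [h0, ← pow_succ', ne_eq, hq, not_false_eq_true, zero_pow, zero_add,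
      pow_eq_zero_iff] at h
    ext i
    fin_cases i <;> simp [h0, h]
  have hfiber (a : F) :
      #{b | a ≠ 0 ∧ a * a ^ q + b * b ^ q = 0} = if a = 0 then 0 else q + 1 := by
    split_ifs with ha
    · simp [ha]
    · simp_rw [ne_eq, ha, not_false_eq_true, true_and, ← pow_succ', add_eq_zero_iff_eq_neg']
      refine card_filter_pow_succ_eq_of_card_eq_sq hF (neg_ne_zero.2 (pow_ne_zero _ ha)) ?_
      rw [← hσ, map_neg, hσ, pow_succ_pow_eq_of_card_eq_sq hF]
  rw [Nat.card_congr (Equiv.subtypeEquivRight hiff),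
    Nat.card_subtype_fin_two_eq_sum (fun a b => a ≠ 0 ∧ a * a ^ q + b * b ^ q = 0),
    sum_congr rfl fun a _ => hfiber a, sum_ite, sum_const, sum_const, filter_ne',
    card_erase_of_mem (mem_univ 0), card_univ, hF]
  simp [mul_comm]

end FiniteField

theorem stmt_9_general (q : ℕ) (F : Type) [Field F] [Fintype F]
    (hF : Fintype.card F = q ^ 2) :
    Nat.card {v : Fin 2 → F // v 0 * (v 0) ^ q + v 1 * (v 1) ^ q = 1} = q ^ 3 - q ∧
    Nat.card {v : Fin 2 → F // v ≠ 0 ∧ v 0 * (v 0) ^ q + v 1 * (v 1) ^ q = 0} =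
      (q + 1) * (q ^ 2 - 1) := by
  exact ⟨FiniteField.card_mul_pow_add_mul_pow_eq_one hF,
    FiniteField.card_ne_zero_and_mul_pow_add_mul_pow_eq_zero hF⟩

/-- For the standard hermitian norm `h(v) = v₁·σ(v₁) + v₂·σ(v₂)` on `F²`, where `F` is a
finite field with `q²` elements and `σ : x ↦ x^q`, the number of vectors of norm `1` is
`q³ − q`, and the number of nonzero isotropic vectors is `(q+1)(q²−1)`. -/
theorem stmt_9 (q : ℕ) (hq : IsPrimePow q) (F : Type) [Field F] [Fintype F]
    (hF : Fintype.card F = q ^ 2) :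
    Nat.card {v : Fin 2 → F // v 0 * (v 0) ^ q + v 1 * (v 1) ^ q = 1} = q ^ 3 - q ∧
    Nat.card {v : Fin 2 → F // v ≠ 0 ∧ v 0 * (v 0) ^ q + v 1 * (v 1) ^ q = 0} =
      (q + 1) * (q ^ 2 - 1) :=
  stmt_9_general q F hF
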